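/- For any inner function u, C_u D_u C_u = D_u^*, i.e. the dual compressed shift is a complex symmetric operator with respect to the conjugation C_u. -/

import Mathlib

open MeasureTheory Complex AddCircle

noncomputable section

namespace Paper

/-- The period `2π`. -/
abbrev T : ℝ := 2 * Real.pi

instance : Fact (0 < T) := ⟨by positivity⟩

/-- Normalized Lebesgue (Haar) measure on the circle. -/
abbrev μ : Measure (AddCircle T) := haarAddCircle

/-- The space `L²(𝕋, dm)`. -/
abbrev L2 : Type := Lp ℂ 2 μ

lemma memLp_mul {u : AddCircle T → ℂ} (hm : AEStronglyMeasurable u μ)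
    (hb : ∀ᵐ x ∂μ, ‖u x‖ ≤ 1) (f : L2) :
    MemLp (fun x => u x * (f : AddCircle T → ℂ) x) 2 μ := by
  refine (Lp.memLp f).of_le (hm.mul (Lp.aestronglyMeasurable f)) ?_
  filter_upwards [hb] with x hx
  calc ‖u x * (f : AddCircle T → ℂ) x‖ = ‖u x‖ * ‖(f : AddCircle T → ℂ) x‖ := norm_mul _ _
    _ ≤ 1 * ‖(f : AddCircle T → ℂ) x‖ := by gcongr
    _ = ‖(f : AddCircle T → ℂ) x‖ := one_mul _

/-- Multiplication by a measurable function bounded by `1`, as a bounded operator on `L²`. -/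
def mulCLM (u : AddCircle T → ℂ) (hm : AEStronglyMeasurable u μ)
    (hb : ∀ᵐ x ∂μ, ‖u x‖ ≤ 1) : L2 →L[ℂ] L2 :=
  LinearMap.mkContinuous
    { toFun := fun f => (memLp_mul hm hb f).toLp _
      map_add' := fun f g => by
        show MemLp.toLp _ (memLp_mul hm hb (f + g)) = _
        have h : (fun x => u x * ((f + g : L2) : AddCircle T → ℂ) x)
            =ᵐ[μ] (fun x => u x * (f : AddCircle T → ℂ) x)
              + (fun x => u x * (g : AddCircle T → ℂ) x) := by
          filter_upwards [Lp.coeFn_add f g] with x hx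
          simp only [Pi.add_apply, hx, mul_add]
        rw [MemLp.toLp_congr (memLp_mul hm hb (f + g))
          ((memLp_mul hm hb f).add (memLp_mul hm hb g)) h, MemLp.toLp_add]
      map_smul' := fun c f => by
        have h : (fun x => u x * ((c • f : L2) : AddCircle T → ℂ) x)
            =ᵐ[μ] c • (fun x => u x * (f : AddCircle T → ℂ) x) := by
          filter_upwards [Lp.coeFn_smul c f] with x hx
          simp only [Pi.smul_apply, hx, smul_eq_mul]
          ring
        simp only [RingHom.id_apply]
        rw [MemLp.toLp_congr (memLp_mul hm hb (c • f))
          ((memLp_mul hm hb f).const_smul c) h, MemLp.toLp_const_smul] }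
    1
    (fun f => by
      simp only [LinearMap.coe_mk, AddHom.coe_mk, one_mul]
      rw [Lp.norm_toLp]
      have h1 : eLpNorm (fun x => u x * (f : AddCircle T → ℂ) x) 2 μ
          ≤ eLpNorm (f : AddCircle T → ℂ) 2 μ := by
        refine eLpNorm_mono_ae ?_
        filter_upwards [hb] with x hx
        calc ‖u x * (f : AddCircle T → ℂ) x‖
            = ‖u x‖ * ‖(f : AddCircle T → ℂ) x‖ := norm_mul _ _
          _ ≤ 1 * ‖(f : AddCircle T → ℂ) x‖ := by gcongr
          _ = ‖(f : AddCircle T → ℂ) x‖ := one_mul _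
      calc (eLpNorm (fun x => u x * (f : AddCircle T → ℂ) x) 2 μ).toReal
          ≤ (eLpNorm (f : AddCircle T → ℂ) 2 μ).toReal :=
            ENNReal.toReal_mono (Lp.eLpNorm_ne_top f) h1
        _ = ‖f‖ := (Lp.norm_def f).symm)

lemma memLp_conj (f : L2) :
    MemLp (fun x => (starRingEnd ℂ) ((f : AddCircle T → ℂ) x)) 2 μ := by
  refine (Lp.memLp f).of_le ?_ ?_
  · exact Complex.continuous_conj.comp_aestronglyMeasurable (Lp.aestronglyMeasurable f)
  · filter_upwards with x
    simp

/-- Complex conjugation on `L²`. -/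
def conjL2 (f : L2) : L2 := (memLp_conj f).toLp _

/-- The independent variable `z = e^{iθ}` as a function on the circle. -/
def zfun : AddCircle T → ℂ := fun x => fourier 1 x

lemma zfun_meas : AEStronglyMeasurable zfun μ :=
  ((map_continuous (fourier (T := T) 1)).aestronglyMeasurable)

lemma zfun_norm : ∀ᵐ x ∂μ, ‖zfun x‖ ≤ 1 := by
  filter_upwards with x
  simp [zfun, Circle.norm_coe]

/-- Multiplication by `z` (the bilateral shift `M` on `L²`). -/
def Mz : L2 →L[ℂ] L2 := mulCLM zfun zfun_meas zfun_norm

/-- Multiplication by `conj z`. -/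
def Mzbar : L2 →L[ℂ] L2 :=
  mulCLM (fun x => (starRingEnd ℂ) (zfun x))
    (Complex.continuous_conj.comp_aestronglyMeasurable zfun_meas)
    (by filter_upwards with x; simp [zfun, Circle.norm_coe])

/-- The Hardy space `H² = {f ∈ L² : f̂(n) = 0 for all n < 0}`. -/
def H2 : Submodule ℂ L2 where
  carrier := {f | ∀ n : ℤ, n < 0 → fourierBasis.repr f n = 0}
  add_mem' := by
    intro f g hf hg n hn
    simp [map_add, hf n hn, hg n hn]
  zero_mem' := by intro n hn; simp
  smul_mem' := by
    intro c f hf n hn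
    simp [_root_.map_smul, hf n hn]

lemma continuous_coeff (n : ℤ) :
    Continuous fun f : L2 => fourierBasis.repr f n := by
  rw [Metric.continuous_iff]
  intro f ε hε
  refine ⟨ε, hε, fun g hg => ?_⟩
  have h1 : fourierBasis.repr g n - fourierBasis.repr f n = fourierBasis.repr (g - f) n := by
    simp [map_sub]
  have h2 : ‖fourierBasis.repr (g - f) n‖ ≤ ‖fourierBasis.repr (g - f)‖ :=
    lp.norm_apply_le_norm (by norm_num) _ n
  have h3 : ‖fourierBasis.repr (g - f)‖ = ‖g - f‖ :=
    fourierBasis.repr.norm_map _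
  calc dist (fourierBasis.repr g n) (fourierBasis.repr f n)
      = ‖fourierBasis.repr (g - f) n‖ := by rw [dist_eq_norm, h1]
    _ ≤ ‖g - f‖ := by rw [← h3]; exact h2
    _ = dist g f := (dist_eq_norm g f).symm
    _ < ε := hg

lemma H2_isClosed : IsClosed (H2 : Set L2) := by
  have : (H2 : Set L2) =
      ⋂ n ∈ {m : ℤ | m < 0}, {f : L2 | fourierBasis.repr f n = 0} := by
    ext f
    simp only [Set.mem_iInter, Set.mem_setOf_eq]
    rfl
  rw [this]
  exact isClosed_biInter fun n _ => isClosed_eq (continuous_coeff n) continuous_const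

instance : CompleteSpace H2 := H2_isClosed.completeSpace_coe

/-- The Riesz projection `P⁺` of `L²` onto `H²`. -/
def Pp : L2 →L[ℂ] L2 := H2.subtypeL ∘L H2.orthogonalProjectionOnto

/-- The projection `P⁻ = I − P⁺` of `L²` onto `conj(H²₀)`. -/
def Pm : L2 →L[ℂ] L2 := ContinuousLinearMap.id ℂ L2 - Pp

/-- `conj(H²₀) = {f ∈ L² : f̂(n) = 0 for all n ≥ 0}`, the orthogonal complement of `H²`. -/
def Hm : Submodule ℂ L2 where
  carrier := {f | ∀ n : ℤ, 0 ≤ n → fourierBasis.repr f n = 0}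
  add_mem' := by
    intro f g hf hg n hn
    simp [map_add, hf n hn, hg n hn]
  zero_mem' := by intro n hn; simp
  smul_mem' := by
    intro c f hf n hn
    simp [_root_.map_smul, hf n hn]

/-- The constant function `1` as an element of `L²`. -/
def oneL2 : L2 := (memLp_const (1 : ℂ)).toLp _

/-- An inner function: a bounded measurable unimodular function on the circle whose
negative Fourier coefficients vanish. -/
structure InnerData where
  u : AddCircle T → ℂ
  meas : AEStronglyMeasurable u μ
  unim : ∀ᵐ x ∂μ, ‖u x‖ = 1
  anal : ∀ n : ℤ, n < 0 → fourierCoeff u n = 0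

namespace InnerData

variable (U : InnerData)

lemma bd : ∀ᵐ x ∂μ, ‖U.u x‖ ≤ 1 := by
  filter_upwards [U.unim] with x hx
  rw [hx]

/-- Multiplication by `u`: the operator `M_u` on `L²`. -/
def M : L2 →L[ℂ] L2 := mulCLM U.u U.meas U.bd

/-- Multiplication by `conj u`: the operator `M_{conj u}` on `L²`. -/
def Mc : L2 →L[ℂ] L2 :=
  mulCLM (fun x => (starRingEnd ℂ) (U.u x))
    (Complex.continuous_conj.comp_aestronglyMeasurable U.meas)
    (by filter_upwards [U.bd] with x hx; simpa using hx)

/-- `u` as an element of `L²`. -/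
def toL2 : L2 :=
  (memLp_top_of_bound U.meas 1 U.bd |>.mono_exponent le_top).toLp _

/-- The value `u(0)` of (the analytic extension of) `u` at the origin, i.e. the mean of `u`. -/
def a0 : ℂ := fourierCoeff U.u 0

/-- The subspace `uH²`. -/
def uH2 : Submodule ℂ L2 := Submodule.map (U.M : L2 →ₗ[ℂ] L2) H2

/-- The model space `K_u = H² ∩ (uH²)ᗮ`. -/
def Ku : Submodule ℂ L2 := H2 ⊓ (U.uH2)ᗮ

lemma Ku_isClosed : IsClosed (U.Ku : Set L2) := by
  have : (U.Ku : Set L2) = (H2 : Set L2) ∩ ((U.uH2)ᗮ : Set L2) := rfl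
  rw [this]
  exact H2_isClosed.inter (U.uH2).isClosed_orthogonal

instance : CompleteSpace U.Ku := U.Ku_isClosed.completeSpace_coe

/-- `K_u^⊥`, the orthogonal complement of the model space in `L²`. -/
def KP : Submodule ℂ L2 := (U.Ku)ᗮ

instance : CompleteSpace U.KP := (U.Ku).isClosed_orthogonal.completeSpace_coe

/-- The orthogonal projection `P_u : L² → K_u` (viewed as an operator on `L²`). -/
def Pu : L2 →L[ℂ] L2 := (U.Ku).subtypeL ∘L (U.Ku).orthogonalProjectionOnto

/-- The dual of the compressed shift: `D_u = (I − P_u) M_z |_{K_u^⊥}`. -/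
def Du : U.KP →L[ℂ] U.KP :=
  (U.KP).orthogonalProjectionOnto ∘L Mz ∘L (U.KP).subtypeL

/-- The conjugation `C_u f = u · conj(z f)` on `L²`. -/
def C (f : L2) : L2 := U.M (conjL2 (Mz f))

/-- The reproducing kernel of `K_u` at `0`: `k₀ᵘ = 1 − conj(u(0))·u`. -/
def k0 : L2 := oneL2 - (starRingEnd ℂ) U.a0 • U.toL2

/-- The similarity `V_u = P⁻ + (conj u/conj u(0)) P⁺` of the paper. -/
def V : L2 →L[ℂ] L2 := Pm + ((starRingEnd ℂ) U.a0)⁻¹ • (U.Mc ∘L Pp)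

/-- The inverse similarity `V_u⁻¹ = P⁻ + conj(u(0)) u P⁺`. -/
def Vinv : L2 →L[ℂ] L2 := Pm + (starRingEnd ℂ) U.a0 • (U.M ∘L Pp)

end InnerData

lemma Mz_mem_H2 {f : L2} (hf : f ∈ H2) : Mz f ∈ H2 := by
  intro n hn
  rw [fourierBasis_repr]
  have hcoe : (Mz f : AddCircle T → ℂ) =ᵐ[μ] fun x => zfun x * (f : AddCircle T → ℂ) x :=
    MemLp.coeFn_toLp (memLp_mul zfun_meas zfun_norm f)
  have h1 : fourierCoeff (Mz f : AddCircle T → ℂ) n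
      = fourierCoeff (f : AddCircle T → ℂ) (n - 1) := by
    unfold fourierCoeff
    rw [integral_congr_ae (by filter_upwards [hcoe] with x hx; rw [hx])]
    refine integral_congr_ae ?_
    filter_upwards with x
    have : fourier (-n) x * zfun x = fourier (-(n - 1)) x := by
      unfold zfun
      rw [show (-(n - 1) : ℤ) = -n + 1 by ring, fourier_add]
    simp only [smul_eq_mul]
    calc fourier (-n) x * (zfun x * (f : AddCircle T → ℂ) x)
        = (fourier (-n) x * zfun x) * (f : AddCircle T → ℂ) x := by ring
      _ = fourier (-(n - 1)) x * (f : AddCircle T → ℂ) x := by rw [this]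
  rw [h1]
  have := hf (n - 1) (by omega)
  rwa [fourierBasis_repr] at this

/-- The unilateral shift `S` on `H²`. -/
def Shift : H2 →L[ℂ] H2 :=
  (Mz ∘L H2.subtypeL).codRestrict H2 (fun x => Mz_mem_H2 x.2)

/-!
`C_u` is an antiunitary involution of `L²` with `C_u M_z C_u = M_z*`, and it maps `K_u` into
itself: since `C_u e_n = u e_{-n-1}`, the negative Fourier coefficients of `C_u f` are inner
products of `f` with `uH²`, and `C_u (u g) = conj (z g)` is orthogonal to `H²` for `g ∈ H²`.
Being antiunitary, `C_u` then also preserves `K_u^⊥`, and for the compression `D_u` of `M_z` to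
`K_u^⊥`, with `g = C_u f`,
`⟪C_u D_u g, h⟫ = ⟪C_u h, M_z C_u f⟫ = ⟪f, M_z h⟫ = ⟪D_u* f, h⟫` for all `h ∈ K_u^⊥`.
-/

open scoped ComplexInnerProductSpace ComplexConjugate

/-- Conjugate-linearity follows from these two axioms. -/
structure IsConjugation {E : Type*} [NormedAddCommGroup E] [InnerProductSpace ℂ E]
    (C : E → E) : Prop where
  involutive : Function.Involutive C
  inner_map_map : ∀ x y, ⟪C x, C y⟫ = ⟪y, x⟫

namespace IsConjugation

variable {E : Type*} [NormedAddCommGroup E] [InnerProductSpace ℂ E] {C : E → E}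

theorem mapsTo_orthogonal (hC : IsConjugation C) {K : Submodule ℂ E} (hK : Set.MapsTo C K K) :
    Set.MapsTo C Kᗮ Kᗮ := fun f hf => (Submodule.mem_orthogonal _ _).mpr fun v hv => by
  rw [← hC.involutive v, hC.inner_map_map, ← inner_conj_symm,
    Submodule.inner_right_of_mem_orthogonal (hK hv) hf, map_zero]

/-- `hT` says `C T C = T*`. -/
theorem conj_compression_conj_eq_adjoint [CompleteSpace E] (hC : IsConjugation C)
    {T : E →L[ℂ] E} (hT : ∀ a b, ⟪C a, T (C b)⟫ = ⟪b, T a⟫)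
    {W : Submodule ℂ E} [CompleteSpace W] (hW : Set.MapsTo C W W) (f g : W) (hg : (g : E) = C f) :
    C ((W.orthogonalProjectionOnto ∘L T ∘L W.subtypeL) g : E) =
      (ContinuousLinearMap.adjoint (W.orthogonalProjectionOnto ∘L T ∘L W.subtypeL) f : E) := by
  set A := W.orthogonalProjectionOnto ∘L T ∘L W.subtypeL
  suffices (⟨C (A g), hW (A g).2⟩ : W) = ContinuousLinearMap.adjoint A f from
    congrArg Subtype.val this
  refine ext_inner_right ℂ fun h => ?_
  simp only [Submodule.coe_inner]
  calc ⟪C (A g), (h : E)⟫ = ⟪C (A g), C (C h)⟫ := by rw [hC.involutive]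
    _ = ⟪C h, T g⟫ := by
      rw [hC.inner_map_map]
      exact Submodule.inner_orthogonalProjectionOnto_eq_of_mem_left (⟨C h, hW h.2⟩ : W) _
    _ = ⟪(f : E), T h⟫ := by rw [hg, hT]
    _ = ⟪ContinuousLinearMap.adjoint A f, h⟫ := by
      rw [ContinuousLinearMap.adjoint_inner_left]
      exact (Submodule.inner_orthogonalProjectionOnto_eq_of_mem_left f _).symm

end IsConjugation

section FourierCoeff

variable {p : ℝ} [Fact (0 < p)]

theorem fourierCoeff_congr_ae {f g : AddCircle p → ℂ} (h : f =ᵐ[haarAddCircle] g) (n : ℤ) :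
    fourierCoeff f n = fourierCoeff g n :=
  integral_congr_ae (by filter_upwards [h] with x hx; rw [hx])

theorem fourierCoeff_fourier_mul (f : AddCircle p → ℂ) (k n : ℤ) :
    fourierCoeff (fun x => fourier k x * f x) n = fourierCoeff f (n - k) := by
  refine integral_congr_ae (Filter.Eventually.of_forall fun x => ?_)
  simp only [smul_eq_mul]
  rw [show -(n - k) = -n + k by ring, fourier_add]
  ring

theorem fourierCoeff_conj (f : AddCircle p → ℂ) (n : ℤ) :
    fourierCoeff (fun x => conj (f x)) n = conj (fourierCoeff f (-n)) := by
  rw [fourierCoeff, fourierCoeff, ← integral_conj]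
  refine integral_congr_ae (Filter.Eventually.of_forall fun x => ?_)
  simp only [smul_eq_mul, map_mul, neg_neg, ← fourier_neg]

end FourierCoeff

theorem coeFn_mulCLM (u : AddCircle T → ℂ) (hm : AEStronglyMeasurable u μ)
    (hb : ∀ᵐ x ∂μ, ‖u x‖ ≤ 1) (f : L2) :
    mulCLM u hm hb f =ᵐ[μ] fun x => u x * f x :=
  MemLp.coeFn_toLp (memLp_mul hm hb f)

theorem coeFn_Mz (f : L2) : Mz f =ᵐ[μ] fun x => zfun x * f x :=
  coeFn_mulCLM _ _ _ f

theorem coeFn_conjL2 (f : L2) : conjL2 f =ᵐ[μ] fun x => conj (f x) :=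
  MemLp.coeFn_toLp _

theorem conj_zfun_mul_self (x : AddCircle T) : conj (zfun x) * zfun x = 1 := by
  simp [Complex.conj_mul', zfun, Circle.norm_coe]

theorem fourierCoeff_Mz (f : L2) (n : ℤ) : fourierCoeff (Mz f) n = fourierCoeff f (n - 1) :=
  (fourierCoeff_congr_ae (coeFn_Mz f) n).trans (fourierCoeff_fourier_mul _ 1 n)

theorem fourierCoeff_conjL2 (f : L2) (n : ℤ) :
    fourierCoeff (conjL2 f) n = conj (fourierCoeff f (-n)) :=
  (fourierCoeff_congr_ae (coeFn_conjL2 f) n).trans (fourierCoeff_conj _ n)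

theorem conjL2_Mz_mem_Hm {g : L2} (hg : g ∈ H2) : conjL2 (Mz g) ∈ Hm := by
  intro n hn
  rw [fourierBasis_repr, fourierCoeff_conjL2, fourierCoeff_Mz, ← fourierBasis_repr,
    hg _ (by omega), map_zero]

theorem inner_eq_zero_of_mem_H2_of_mem_Hm {f g : L2} (hf : f ∈ H2) (hg : g ∈ Hm) :
    ⟪f, g⟫ = 0 := by
  rw [← fourierBasis.repr.inner_map_map, lp.inner_eq_tsum]
  convert tsum_zero with n
  rcases lt_or_ge n 0 with hn | hn
  · simp [hf n hn]
  · simp [hg n hn]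

theorem fourierLp_mem_H2 {n : ℤ} (hn : 0 ≤ n) : fourierLp 2 n ∈ H2 := by
  intro k hk
  rw [← coe_fourierBasis, fourierBasis.repr_self, lp.single_apply, Pi.single_apply,
    if_neg (by omega)]

namespace InnerData

variable (U : InnerData)

theorem conj_mul_self_ae : ∀ᵐ x ∂μ, conj (U.u x) * U.u x = 1 := by
  filter_upwards [U.unim] with x hx
  rw [Complex.conj_mul', hx]
  norm_num

theorem coeFn_C (f : L2) : U.C f =ᵐ[μ] fun x => U.u x * conj (zfun x * f x) := by
  filter_upwards [coeFn_mulCLM U.u U.meas U.bd (conjL2 (Mz f)), coeFn_conjL2 (Mz f), coeFn_Mz f]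
    with x hM hconj hz
  rw [C, M, hM, hconj, hz]

theorem isConjugation_C : IsConjugation U.C where
  involutive f := by
    refine Lp.ext ?_
    filter_upwards [U.coeFn_C (U.C f), U.coeFn_C f, U.conj_mul_self_ae] with x h₁ h₂ hu
    rw [h₁, h₂]
    simp only [map_mul, Complex.conj_conj]
    linear_combination f x * (conj (zfun x) * zfun x * hu + conj_zfun_mul_self x)
  inner_map_map f g := by
    rw [L2.inner_def, L2.inner_def]
    refine integral_congr_ae ?_
    filter_upwards [U.coeFn_C f, U.coeFn_C g, U.conj_mul_self_ae] with x h₁ h₂ hu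
    rw [h₁, h₂]
    simp only [RCLike.inner_apply, map_mul, Complex.conj_conj]
    linear_combination conj (g x) * f x * (conj (zfun x) * zfun x * hu + conj_zfun_mul_self x)

theorem inner_C_Mz_C (a b : L2) : ⟪U.C a, Mz (U.C b)⟫ = ⟪b, Mz a⟫ := by
  rw [L2.inner_def, L2.inner_def]
  refine integral_congr_ae ?_
  filter_upwards [U.coeFn_C a, U.coeFn_C b, coeFn_Mz (U.C b), coeFn_Mz a, U.conj_mul_self_ae]
    with x h₁ h₂ h₃ h₄ hu
  rw [h₁, h₃, h₂, h₄]
  simp only [RCLike.inner_apply, map_mul, Complex.conj_conj]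
  linear_combination conj (b x) * zfun x * a x *
    (conj (zfun x) * zfun x * hu + conj_zfun_mul_self x)

theorem C_fourierLp (n : ℤ) : U.C (fourierLp 2 n) = U.M (fourierLp 2 (-n - 1)) := by
  refine Lp.ext ?_
  filter_upwards [U.coeFn_C (fourierLp 2 n), coeFn_mulCLM U.u U.meas U.bd (fourierLp 2 (-n - 1)),
    coeFn_fourierLp 2 n, coeFn_fourierLp 2 (-n - 1)] with x h₁ h₂ h₃ h₄
  rw [h₁, M, h₂, h₃, h₄, zfun, show -n - 1 = -(1 + n) by ring, fourier_neg, fourier_add]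

theorem C_M (g : L2) : U.C (U.M g) = conjL2 (Mz g) := by
  refine Lp.ext ?_
  filter_upwards [U.coeFn_C (U.M g), coeFn_mulCLM U.u U.meas U.bd g, coeFn_conjL2 (Mz g),
    coeFn_Mz g, U.conj_mul_self_ae] with x h₁ h₂ h₃ h₄ hu
  rw [h₁, M, h₂, h₃, h₄]
  simp only [map_mul]
  linear_combination conj (zfun x) * conj (g x) * hu

theorem C_mem_H2 {f : L2} (hf : f ∈ U.uH2ᗮ) : U.C f ∈ H2 := by
  intro n _
  rw [HilbertBasis.repr_apply_apply, coe_fourierBasis,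
    ← U.isConjugation_C.inner_map_map (U.C f), U.isConjugation_C.involutive, C_fourierLp]
  exact Submodule.inner_left_of_mem_orthogonal (Submodule.mem_map_of_mem (fourierLp_mem_H2 (by omega))) hf

theorem C_mem_orthogonal_uH2 {f : L2} (hf : f ∈ H2) : U.C f ∈ U.uH2ᗮ := by
  refine (Submodule.mem_orthogonal _ _).mpr ?_
  rintro _ ⟨g, hg, rfl⟩
  rw [← U.isConjugation_C.inner_map_map (U.C f), U.isConjugation_C.involutive]
  exact U.C_M g ▸ inner_eq_zero_of_mem_H2_of_mem_Hm hf (conjL2_Mz_mem_Hm hg)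

theorem mapsTo_C_Ku : Set.MapsTo U.C U.Ku U.Ku := fun _ ⟨hH2, hperp⟩ =>
  ⟨U.C_mem_H2 hperp, U.C_mem_orthogonal_uH2 hH2⟩

end InnerData

/-- `C_u D_u C_u = D_u^*`: the dual compressed shift is complex symmetric
with respect to the conjugation `C_u` (which preserves `K_u^⊥`). -/
theorem Du_complex_symmetric (U : InnerData) :
    (∀ f : L2, f ∈ U.KP → U.C f ∈ U.KP) ∧
    (∀ f g : U.KP, (g : L2) = U.C (f : L2) →
      U.C (U.Du g : L2) = ((ContinuousLinearMap.adjoint U.Du) f : L2)) :=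
  ⟨fun _ hf => U.isConjugation_C.mapsTo_orthogonal U.mapsTo_C_Ku hf,
    U.isConjugation_C.conj_compression_conj_eq_adjoint U.inner_C_Mz_C
      (U.isConjugation_C.mapsTo_orthogonal U.mapsTo_C_Ku)⟩

end Paper
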